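/- Let Ỹ(1,π₂), Ỹ(0,0) be square-integrable random variables, S a conditioning variable, ψ a square-integrable random vector with E[Var[ψ|S]] nonsingular, and π₁ ∈ (0,1), E[N] > 0. Define β = π₁(1−π₁)(E[Var[ψ|S]])^{-1} E[Cov[(1/π₁)Ỹ(1,π₂) + (1/(1−π₁))Ỹ(0,0), ψ | S]]·E[N], and Y*(z,h) = Ỹ(z,h) − (ψ − E[ψ])'β/E[N]. Let V(A) = (1/π₁)Var[A(1,π₂)] + (1/(1−π₁))Var[A(0,0)] − π₁(1−π₁)E[((1/π₁)E[A(1,π₂)|S] + (1/(1−π₁))E[A(0,0)|S])²] (with the conditional means centered). Then V(Y*) = V(Ỹ) − κ², where κ² = (1/(π₁(1−π₁)))·(1/E[N]²)·E[Var[ψ'β | S]] ≥ 0. In particular V(Y*) ≤ V(Ỹ). -/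

import Mathlib

/-!
Write `P = μ[·|m]`. By the law of total variance and the pointwise identity
`x²/π + y²/(1-π) - π(1-π)(x/π + y/(1-π))² = (x - y)²`,
`V(A) = E[Var[A₁|m]]/π + E[Var[A₀|m]]/(1-π) + E[((PA₁ - E A₁) - (PA₀ - E A₀))²]`.
Subtracting the same adjustment `g` from both outcomes leaves the last term unchanged, and
`E[Cov[·,·|m]]` is bilinear, so `V(A - g) = V(A) - 2 E[Cov[W, g|m]] + E[Var[g|m]]/(π(1-π))`.
For `g = (ψ - Eψ)'β/E[N]` the last term is `κ²`, and the normal equations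
`E[Var[ψ|m]] β = π(1-π) E[N] E[Cov[W, ψ|m]]` make the cross term `2 E[Cov[W, g|m]]` equal `2κ²`.
-/

open MeasureTheory ProbabilityTheory Matrix

/-- `E[Var[ψ | S]]`: the expected conditional covariance matrix of the random vector
`ψ` given the σ-algebra `m`. -/
noncomputable def condCovMat {Ω : Type*} {mΩ : MeasurableSpace Ω} (μ : Measure Ω)
    (m : MeasurableSpace Ω) {d : ℕ} (ψ : Ω → Fin d → ℝ) : Matrix (Fin d) (Fin d) ℝ :=
  Matrix.of fun i j =>
    ∫ ω, (ψ ω i - (μ[fun ω => ψ ω i|m]) ω) * (ψ ω j - (μ[fun ω => ψ ω j|m]) ω) ∂μ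

/-- `E[Cov[W, ψ | S]]`: the expected conditional covariance of `W` with the coordinates
of `ψ` given the σ-algebra `m`. -/
noncomputable def condCovVec {Ω : Type*} {mΩ : MeasurableSpace Ω} (μ : Measure Ω)
    (m : MeasurableSpace Ω) {d : ℕ} (W : Ω → ℝ) (ψ : Ω → Fin d → ℝ) : Fin d → ℝ :=
  fun i => ∫ ω, (W ω - (μ[W|m]) ω) * (ψ ω i - (μ[fun ω => ψ ω i|m]) ω) ∂μ

/-- The asymptotic variance functional `V` (with centered conditional means). -/
noncomputable def Vnotau {Ω : Type*} {mΩ : MeasurableSpace Ω} (μ : Measure Ω)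
    (m : MeasurableSpace Ω) (π₁ : ℝ) (A1 A0 : Ω → ℝ) : ℝ :=
  (1/π₁) * variance A1 μ + (1/(1-π₁)) * variance A0 μ
    - π₁*(1-π₁) * ∫ ω, ((1/π₁) * ((μ[A1|m]) ω - ∫ x, A1 x ∂μ)
        + (1/(1-π₁)) * ((μ[A0|m]) ω - ∫ x, A0 x ∂μ))^2 ∂μ

lemma Matrix.dotProduct_mulVec_smul_nonsing_inv_mulVec {n R : Type*} [Fintype n] [DecidableEq n]
    [CommRing R] (A : Matrix n n R) (hA : IsUnit A.det) (t : R) (c : n → R) :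
    (t • (A⁻¹ *ᵥ c)) ⬝ᵥ (A *ᵥ (t • (A⁻¹ *ᵥ c))) = t * (c ⬝ᵥ (t • (A⁻¹ *ᵥ c))) := by
  rw [mulVec_smul, mulVec_mulVec, mul_nonsing_inv _ hA, one_mulVec, dotProduct_smul, smul_eq_mul,
    dotProduct_comm]

section ExpectedCondCov

variable {Ω : Type*} {mΩ : MeasurableSpace Ω} {μ : Measure Ω} {m : MeasurableSpace Ω}
  {f f₁ f₂ g g₁ g₂ h : Ω → ℝ}

lemma MeasureTheory.MemLp.sub_condExp {p : ENNReal} (hp : 1 ≤ p) (hg : MemLp g p μ) :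
    MemLp (fun ω => g ω - (μ[g|m]) ω) p μ :=
  hg.sub (hg.condExp hp)

noncomputable def expectedCondCov (μ : Measure Ω) (m : MeasurableSpace Ω) (f g : Ω → ℝ) : ℝ :=
  ∫ ω, (f ω - (μ[f|m]) ω) * (g ω - (μ[g|m]) ω) ∂μ

lemma expectedCondCov_comm (f g : Ω → ℝ) :
    expectedCondCov μ m f g = expectedCondCov μ m g f := by
  simp_rw [expectedCondCov, mul_comm]

lemma expectedCondCov_self (f : Ω → ℝ) :
    expectedCondCov μ m f f = ∫ ω, (f ω - (μ[f|m]) ω) ^ 2 ∂μ := by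
  simp_rw [expectedCondCov, sq]

lemma integral_mul_sub_condExp_eq_zero [IsFiniteMeasure μ] (hm : m ≤ mΩ)
    (hh : StronglyMeasurable[m] h) (hh₂ : MemLp h 2 μ) (hg : MemLp g 2 μ) :
    ∫ ω, h ω * (g ω - (μ[g|m]) ω) ∂μ = 0 := by
  have hhg : Integrable (fun ω => h ω * g ω) μ := hh₂.integrable_mul hg
  have hpull : μ[fun ω => h ω * g ω|m] =ᵐ[μ] fun ω => h ω * (μ[g|m]) ω :=
    condExp_mul_of_stronglyMeasurable_left hh hhg (hg.integrable one_le_two)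
  have hhPg : Integrable (fun ω => h ω * (μ[g|m]) ω) μ :=
    hh₂.integrable_mul (hg.condExp one_le_two)
  simp_rw [mul_sub]
  rw [integral_sub hhg hhPg, sub_eq_zero, ← integral_condExp hm]
  exact integral_congr_ae hpull

variable [IsProbabilityMeasure μ]

/-- The conditional residual of `g` is orthogonal to every `m`-measurable function, so pairing it
with `f - μ[f|m]` or with `f - μ[f]` gives the same integral. -/
lemma expectedCondCov_eq_covariance (hm : m ≤ mΩ) (hf : MemLp f 2 μ) (hg : MemLp g 2 μ) :
    expectedCondCov μ m f g = cov[f, fun ω => g ω - (μ[g|m]) ω; μ] := by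
  have hr := hg.sub_condExp (m := m) one_le_two
  have hr_mean : ∫ ω, g ω - (μ[g|m]) ω ∂μ = 0 := by
    simpa using integral_mul_sub_condExp_eq_zero hm (stronglyMeasurable_const (b := (1 : ℝ)))
      (memLp_const 1) hg
  have horth := integral_mul_sub_condExp_eq_zero hm
    (stronglyMeasurable_condExp.sub stronglyMeasurable_const)
    ((hf.condExp one_le_two).sub (memLp_const (∫ x, f x ∂μ))) hg
  calc expectedCondCov μ m f g
      = ∫ ω, (f ω - ∫ x, f x ∂μ) * (g ω - (μ[g|m]) ω)
          - ((μ[f|m]) ω - ∫ x, f x ∂μ) * (g ω - (μ[g|m]) ω) ∂μ := by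
        unfold expectedCondCov; congr with ω; ring
    _ = cov[f, fun ω => g ω - (μ[g|m]) ω; μ] := by
        have h₁ : Integrable (fun ω => (f ω - ∫ x, f x ∂μ) * (g ω - (μ[g|m]) ω)) μ :=
          (hf.sub (memLp_const _)).integrable_mul hr
        have h₂ : Integrable (fun ω => ((μ[f|m]) ω - ∫ x, f x ∂μ) * (g ω - (μ[g|m]) ω)) μ :=
          ((hf.condExp one_le_two).sub (memLp_const _)).integrable_mul hr
        rw [integral_sub h₁ h₂]
        simp only [covariance, hr_mean, sub_zero]
        exact sub_eq_self.2 horth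

lemma expectedCondCov_sub_left (hm : m ≤ mΩ) (hf₁ : MemLp f₁ 2 μ) (hf₂ : MemLp f₂ 2 μ)
    (hg : MemLp g 2 μ) :
    expectedCondCov μ m (fun ω => f₁ ω - f₂ ω) g
      = expectedCondCov μ m f₁ g - expectedCondCov μ m f₂ g := by
  rw [expectedCondCov_eq_covariance (f := fun ω => f₁ ω - f₂ ω) hm (hf₁.sub hf₂) hg,
    expectedCondCov_eq_covariance hm hf₁ hg, expectedCondCov_eq_covariance hm hf₂ hg]
  exact covariance_fun_sub_left hf₁ hf₂ (hg.sub_condExp one_le_two)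

lemma expectedCondCov_sub_right (hm : m ≤ mΩ) (hf : MemLp f 2 μ) (hg₁ : MemLp g₁ 2 μ)
    (hg₂ : MemLp g₂ 2 μ) :
    expectedCondCov μ m f (fun ω => g₁ ω - g₂ ω)
      = expectedCondCov μ m f g₁ - expectedCondCov μ m f g₂ := by
  simp_rw [expectedCondCov_comm f, expectedCondCov_sub_left hm hg₁ hg₂ hf]

lemma expectedCondCov_add_left (hm : m ≤ mΩ) (hf₁ : MemLp f₁ 2 μ) (hf₂ : MemLp f₂ 2 μ)
    (hg : MemLp g 2 μ) :
    expectedCondCov μ m (fun ω => f₁ ω + f₂ ω) g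
      = expectedCondCov μ m f₁ g + expectedCondCov μ m f₂ g := by
  rw [expectedCondCov_eq_covariance (f := fun ω => f₁ ω + f₂ ω) hm (hf₁.add hf₂) hg,
    expectedCondCov_eq_covariance hm hf₁ hg, expectedCondCov_eq_covariance hm hf₂ hg]
  exact covariance_add_left hf₁ hf₂ (hg.sub_condExp one_le_two)

lemma expectedCondCov_const_mul_left (hm : m ≤ mΩ) (hf : MemLp f 2 μ) (hg : MemLp g 2 μ)
    (c : ℝ) : expectedCondCov μ m (fun ω => c * f ω) g = c * expectedCondCov μ m f g := by
  rw [expectedCondCov_eq_covariance (f := fun ω => c * f ω) hm (hf.const_mul c) hg,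
    expectedCondCov_eq_covariance hm hf hg, covariance_const_mul_left]

lemma expectedCondCov_add_const_left (hm : m ≤ mΩ) (hf : MemLp f 2 μ) (hg : MemLp g 2 μ)
    (k : ℝ) : expectedCondCov μ m (fun ω => f ω + k) g = expectedCondCov μ m f g := by
  rw [expectedCondCov_eq_covariance (f := fun ω => f ω + k) hm (hf.add (memLp_const k)) hg,
    expectedCondCov_eq_covariance hm hf hg, covariance_add_const_left (hf.integrable one_le_two)]

lemma expectedCondCov_sum_mul_const_left {ι : Type*} [Fintype ι] {ψ : Ω → ι → ℝ}
    (hm : m ≤ mΩ) (hψ : ∀ i, MemLp (fun ω => ψ ω i) 2 μ) (hg : MemLp g 2 μ) (v : ι → ℝ) :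
    expectedCondCov μ m (fun ω => ∑ i, ψ ω i * v i) g
      = ∑ i, expectedCondCov μ m (fun ω => ψ ω i) g * v i := by
  have hψv : ∀ i, MemLp (fun ω => ψ ω i * v i) 2 μ := fun i => (hψ i).mul_const (v i)
  rw [expectedCondCov_eq_covariance (f := fun ω => ∑ i, ψ ω i * v i) hm
      (memLp_finsetSum _ fun i _ => hψv i) hg,
    covariance_fun_sum_left hψv (hg.sub_condExp one_le_two)]
  simp_rw [covariance_mul_const_left, expectedCondCov_eq_covariance hm (hψ _) hg]

lemma variance_eq_expectedCondCov_self_add (hm : m ≤ mΩ) (hf : MemLp f 2 μ) :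
    Var[f; μ] = expectedCondCov μ m f f + ∫ ω, ((μ[f|m]) ω - ∫ x, f x ∂μ) ^ 2 ∂μ := by
  rw [← integral_condVar_add_variance_condExp hm hf, condVar, integral_condExp hm,
    variance_eq_integral (hf.condExp one_le_two).aemeasurable, integral_condExp hm,
    expectedCondCov_self]
  rfl

end ExpectedCondCov

section Vnotau

variable {Ω : Type*} {mΩ : MeasurableSpace Ω} {μ : Measure Ω} [IsProbabilityMeasure μ]
  {m : MeasurableSpace Ω} {π₁ : ℝ} {A₁ A₀ g : Ω → ℝ}

lemma Vnotau_eq (hm : m ≤ mΩ) (hπ : π₁ ∈ Set.Ioo (0 : ℝ) 1) (hA₁ : MemLp A₁ 2 μ)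
    (hA₀ : MemLp A₀ 2 μ) :
    Vnotau μ m π₁ A₁ A₀ = (1/π₁) * expectedCondCov μ m A₁ A₁
      + (1/(1-π₁)) * expectedCondCov μ m A₀ A₀
      + ∫ ω, (((μ[A₁|m]) ω - ∫ x, A₁ x ∂μ) - ((μ[A₀|m]) ω - ∫ x, A₀ x ∂μ)) ^ 2 ∂μ := by
  obtain ⟨hπ₀, hπ₁⟩ := hπ
  have hπ₁' : 1 - π₁ ≠ 0 := by linarith
  set u := fun ω => (μ[A₁|m]) ω - ∫ x, A₁ x ∂μ
  set v := fun ω => (μ[A₀|m]) ω - ∫ x, A₀ x ∂μ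
  have hu : MemLp u 2 μ := (hA₁.condExp one_le_two).sub (memLp_const _)
  have hv : MemLp v 2 μ := (hA₀.condExp one_le_two).sub (memLp_const _)
  have huv : MemLp (fun ω => (1/π₁) * u ω + (1/(1-π₁)) * v ω) 2 μ :=
    (hu.const_mul _).add (hv.const_mul _)
  have hsq : ∫ ω, (u ω - v ω) ^ 2 ∂μ = (1/π₁) * ∫ ω, u ω ^ 2 ∂μ + (1/(1-π₁)) * ∫ ω, v ω ^ 2 ∂μ
      - π₁*(1-π₁) * ∫ ω, ((1/π₁) * u ω + (1/(1-π₁)) * v ω) ^ 2 ∂μ := by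
    have i₁ : Integrable (fun ω => (1/π₁) * u ω ^ 2) μ := hu.integrable_sq.const_mul _
    have i₀ : Integrable (fun ω => (1/(1-π₁)) * v ω ^ 2) μ := hv.integrable_sq.const_mul _
    have i : Integrable (fun ω => π₁*(1-π₁) * ((1/π₁) * u ω + (1/(1-π₁)) * v ω) ^ 2) μ :=
      huv.integrable_sq.const_mul _
    have i₁₀ : Integrable (fun ω => (1/π₁) * u ω ^ 2 + (1/(1-π₁)) * v ω ^ 2) μ := i₁.add i₀
    rw [← integral_const_mul, ← integral_const_mul, ← integral_const_mul,
      ← integral_add i₁ i₀, ← integral_sub i₁₀ i]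
    congr with ω
    field_simp
    ring
  rw [Vnotau, variance_eq_expectedCondCov_self_add hm hA₁,
    variance_eq_expectedCondCov_self_add hm hA₀, hsq]
  ring

lemma Vnotau_sub_eq (hm : m ≤ mΩ) (hπ : π₁ ∈ Set.Ioo (0 : ℝ) 1) (hA₁ : MemLp A₁ 2 μ)
    (hA₀ : MemLp A₀ 2 μ) (hg : MemLp g 2 μ) :
    Vnotau μ m π₁ (fun ω => A₁ ω - g ω) (fun ω => A₀ ω - g ω)
      = Vnotau μ m π₁ A₁ A₀
        - 2 * expectedCondCov μ m (fun ω => (1/π₁) * A₁ ω + (1/(1-π₁)) * A₀ ω) g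
        + (1/(π₁*(1-π₁))) * expectedCondCov μ m g g := by
  have hπ₀ : π₁ ≠ 0 := hπ.1.ne'
  have hπ₁ : 1 - π₁ ≠ 0 := by linarith [hπ.2]
  have hA₁g : MemLp (fun ω => A₁ ω - g ω) 2 μ := hA₁.sub hg
  have hA₀g : MemLp (fun ω => A₀ ω - g ω) 2 μ := hA₀.sub hg
  have hbetween : ∫ ω, (((μ[fun ω => A₁ ω - g ω|m]) ω - ∫ x, A₁ x - g x ∂μ)
        - ((μ[fun ω => A₀ ω - g ω|m]) ω - ∫ x, A₀ x - g x ∂μ)) ^ 2 ∂μ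
      = ∫ ω, (((μ[A₁|m]) ω - ∫ x, A₁ x ∂μ) - ((μ[A₀|m]) ω - ∫ x, A₀ x ∂μ)) ^ 2 ∂μ := by
    have hi₁ := hA₁.integrable one_le_two
    have hi₀ := hA₀.integrable one_le_two
    have hig := hg.integrable one_le_two
    rw [integral_sub hi₁ hig, integral_sub hi₀ hig]
    refine integral_congr_ae ?_
    have h₁ : μ[fun ω => A₁ ω - g ω|m] =ᵐ[μ] μ[A₁|m] - μ[g|m] := condExp_sub hi₁ hig m
    have h₀ : μ[fun ω => A₀ ω - g ω|m] =ᵐ[μ] μ[A₀|m] - μ[g|m] := condExp_sub hi₀ hig m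
    filter_upwards [h₁, h₀] with ω h₁ h₀
    rw [h₁, h₀, Pi.sub_apply, Pi.sub_apply]
    ring
  rw [Vnotau_eq hm hπ hA₁g hA₀g, Vnotau_eq hm hπ hA₁ hA₀, hbetween,
    expectedCondCov_sub_left hm hA₁ hg hA₁g, expectedCondCov_sub_right hm hA₁ hA₁ hg,
    expectedCondCov_sub_right hm hg hA₁ hg,
    expectedCondCov_sub_left hm hA₀ hg hA₀g, expectedCondCov_sub_right hm hA₀ hA₀ hg,
    expectedCondCov_sub_right hm hg hA₀ hg,
    expectedCondCov_add_left hm (hA₁.const_mul _) (hA₀.const_mul _) hg,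
    expectedCondCov_const_mul_left hm hA₁ hg, expectedCondCov_const_mul_left hm hA₀ hg,
    expectedCondCov_comm g A₁, expectedCondCov_comm g A₀]
  field_simp
  ring

end Vnotau

section Projection

variable {Ω : Type*} {mΩ : MeasurableSpace Ω} {μ : Measure Ω} {m : MeasurableSpace Ω} {d : ℕ}
  {ψ : Ω → Fin d → ℝ} {W : Ω → ℝ}

lemma centered_sum_mul_div_eq (v : Fin d → ℝ) (c : ℝ) :
    (fun ω => (∑ i, (ψ ω i - ∫ x, ψ x i ∂μ) * v i) / c)
      = fun ω => c⁻¹ * ∑ i, ψ ω i * v i + -(c⁻¹ * ∑ i, (∫ x, ψ x i ∂μ) * v i) := by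
  funext ω
  simp only [sub_mul, Finset.sum_sub_distrib]
  ring

variable [IsProbabilityMeasure μ]

lemma expectedCondCov_sum_mul_const_right (hm : m ≤ mΩ) (hψ : ∀ i, MemLp (fun ω => ψ ω i) 2 μ)
    (hW : MemLp W 2 μ) (v : Fin d → ℝ) :
    expectedCondCov μ m W (fun ω => ∑ i, ψ ω i * v i) = condCovVec μ m W ψ ⬝ᵥ v := by
  rw [expectedCondCov_comm, expectedCondCov_sum_mul_const_left hm hψ hW]
  simp_rw [expectedCondCov_comm _ W]
  rfl

lemma expectedCondCov_sum_mul_const_self (hm : m ≤ mΩ) (hψ : ∀ i, MemLp (fun ω => ψ ω i) 2 μ)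
    (v : Fin d → ℝ) :
    expectedCondCov μ m (fun ω => ∑ i, ψ ω i * v i) (fun ω => ∑ i, ψ ω i * v i)
      = v ⬝ᵥ (condCovMat μ m ψ *ᵥ v) := by
  have hψv : MemLp (fun ω => ∑ i, ψ ω i * v i) 2 μ :=
    memLp_finsetSum _ fun i _ => (hψ i).mul_const (v i)
  rw [expectedCondCov_sum_mul_const_left hm hψ hψv]
  simp_rw [expectedCondCov_sum_mul_const_right hm hψ (hψ _)]
  simp only [dotProduct, mulVec, Finset.mul_sum, Finset.sum_mul]
  refine Finset.sum_congr rfl fun i _ => Finset.sum_congr rfl fun j _ => ?_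
  rw [show condCovVec μ m (fun ω => ψ ω i) ψ j = condCovMat μ m ψ i j from rfl]
  ring

lemma memLp_centered_sum_mul_div (hψ : ∀ i, MemLp (fun ω => ψ ω i) 2 μ) (v : Fin d → ℝ)
    (c : ℝ) : MemLp (fun ω => (∑ i, (ψ ω i - ∫ x, ψ x i ∂μ) * v i) / c) 2 μ := by
  rw [centered_sum_mul_div_eq]
  exact ((memLp_finsetSum _ fun i _ => (hψ i).mul_const (v i)).const_mul _).add (memLp_const _)

lemma expectedCondCov_centered_sum_mul_div_right (hm : m ≤ mΩ)
    (hψ : ∀ i, MemLp (fun ω => ψ ω i) 2 μ) (hW : MemLp W 2 μ) (v : Fin d → ℝ) (c : ℝ) :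
    expectedCondCov μ m W (fun ω => (∑ i, (ψ ω i - ∫ x, ψ x i ∂μ) * v i) / c)
      = c⁻¹ * (condCovVec μ m W ψ ⬝ᵥ v) := by
  have hψv : MemLp (fun ω => ∑ i, ψ ω i * v i) 2 μ :=
    memLp_finsetSum _ fun i _ => (hψ i).mul_const (v i)
  rw [centered_sum_mul_div_eq, expectedCondCov_comm,
    expectedCondCov_add_const_left hm (hψv.const_mul _) hW,
    expectedCondCov_const_mul_left hm hψv hW, expectedCondCov_comm,
    expectedCondCov_sum_mul_const_right hm hψ hW]

lemma expectedCondCov_centered_sum_mul_div_self (hm : m ≤ mΩ)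
    (hψ : ∀ i, MemLp (fun ω => ψ ω i) 2 μ) (v : Fin d → ℝ) (c : ℝ) :
    expectedCondCov μ m (fun ω => (∑ i, (ψ ω i - ∫ x, ψ x i ∂μ) * v i) / c)
        (fun ω => (∑ i, (ψ ω i - ∫ x, ψ x i ∂μ) * v i) / c)
      = c⁻¹ ^ 2 * (v ⬝ᵥ (condCovMat μ m ψ *ᵥ v)) := by
  have hψv : MemLp (fun ω => ∑ i, ψ ω i * v i) 2 μ :=
    memLp_finsetSum _ fun i _ => (hψ i).mul_const (v i)
  have hg := memLp_centered_sum_mul_div hψ v c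
  rw [centered_sum_mul_div_eq] at hg ⊢
  rw [expectedCondCov_add_const_left hm (hψv.const_mul _) hg,
    expectedCondCov_const_mul_left hm hψv hg, expectedCondCov_comm,
    expectedCondCov_add_const_left hm (hψv.const_mul _) hψv,
    expectedCondCov_const_mul_left hm hψv hψv, expectedCondCov_sum_mul_const_self hm hψ]
  ring

end Projection

theorem covariate_adjustment_variance_improvement_general {Ω : Type*} {mΩ : MeasurableSpace Ω}
    (μ : Measure Ω) [IsProbabilityMeasure μ]
    (m : MeasurableSpace Ω) (hm : m ≤ mΩ)
    (π₁ : ℝ) (hπ : π₁ ∈ Set.Ioo (0 : ℝ) 1)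
    {d : ℕ} (ψ : Ω → Fin d → ℝ) (T1 T0 N : Ω → ℝ)
    (hT1 : MemLp T1 2 μ) (hT0 : MemLp T0 2 μ)
    (hψ : ∀ i, MemLp (fun ω => ψ ω i) 2 μ)
    (hdet : IsUnit (condCovMat μ m ψ).det) :
    let EN := ∫ x, N x ∂μ
    let W := fun ω => (1/π₁) * T1 ω + (1/(1-π₁)) * T0 ω
    let β := (π₁*(1-π₁)*EN) • ((condCovMat μ m ψ)⁻¹ *ᵥ condCovVec μ m W ψ)
    let ψβ := fun ω => ∑ i, ψ ω i * β i
    let Y1s := fun ω => T1 ω - (∑ i, (ψ ω i - ∫ x, ψ x i ∂μ) * β i) / EN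
    let Y0s := fun ω => T0 ω - (∑ i, (ψ ω i - ∫ x, ψ x i ∂μ) * β i) / EN
    let κ2 := (1/(π₁*(1-π₁))) * (1/EN^2) * ∫ ω, (ψβ ω - (μ[ψβ|m]) ω)^2 ∂μ
    Vnotau μ m π₁ Y1s Y0s = Vnotau μ m π₁ T1 T0 - κ2 ∧
    0 ≤ κ2 ∧
    Vnotau μ m π₁ Y1s Y0s ≤ Vnotau μ m π₁ T1 T0 := by
  intro EN W β ψβ Y1s Y0s κ2
  have hπ' : 0 < π₁ * (1 - π₁) := mul_pos hπ.1 (sub_pos.2 hπ.2)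
  have hπ_inv : 1 / (π₁ * (1 - π₁)) * (π₁ * (1 - π₁)) = 1 := one_div_mul_cancel hπ'.ne'
  have hEN_inv : EN⁻¹ ^ 2 * EN = EN⁻¹ := by simpa [sq] using mul_self_mul_inv EN⁻¹
  have hW : MemLp W 2 μ := (hT1.const_mul _).add (hT0.const_mul _)
  have hproj := (condCovMat μ m ψ).dotProduct_mulVec_smul_nonsing_inv_mulVec hdet
    (π₁*(1-π₁)*EN) (condCovVec μ m W ψ)
  have hκ2 : κ2 = EN⁻¹ * (condCovVec μ m W ψ ⬝ᵥ β) := by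
    simp only [κ2]
    rw [← expectedCondCov_self, expectedCondCov_sum_mul_const_self hm hψ, hproj, one_div (EN ^ 2),
      ← inv_pow]
    linear_combination (EN⁻¹ ^ 2 * EN * (condCovVec μ m W ψ ⬝ᵥ β)) * hπ_inv
      + (condCovVec μ m W ψ ⬝ᵥ β) * hEN_inv
  have hV : Vnotau μ m π₁ Y1s Y0s = Vnotau μ m π₁ T1 T0 - κ2 := by
    rw [show Vnotau μ m π₁ Y1s Y0s = _ from
        Vnotau_sub_eq hm hπ hT1 hT0 (memLp_centered_sum_mul_div hψ β EN),
      expectedCondCov_centered_sum_mul_div_right hm hψ hW,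
      expectedCondCov_centered_sum_mul_div_self hm hψ, hproj, hκ2]
    linear_combination (EN⁻¹ ^ 2 * EN * (condCovVec μ m W ψ ⬝ᵥ β)) * hπ_inv
      + (condCovVec μ m W ψ ⬝ᵥ β) * hEN_inv
  have hκ2_nonneg : 0 ≤ κ2 :=
    mul_nonneg (mul_nonneg (one_div_nonneg.2 hπ'.le) (one_div_nonneg.2 (sq_nonneg EN)))
      (integral_nonneg fun ω => sq_nonneg _)
  exact ⟨hV, hκ2_nonneg, hV ▸ sub_le_self _ hκ2_nonneg⟩

/-- Covariate-adjustment variance improvement (Theorem 5.4): with the projection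
coefficient `β = π₁(1−π₁)(E[Var[ψ|S]])⁻¹ E[Cov[(1/π₁)Ỹ(1,π₂)+(1/(1−π₁))Ỹ(0,0), ψ|S]]·E[N]`
and `Y*(z,h) = Ỹ(z,h) − (ψ − E[ψ])'β/E[N]`, the adjusted asymptotic variance satisfies
`V(Y*) = V(Ỹ) − κ²` with `κ² = (1/(π₁(1−π₁)))·(1/E[N]²)·E[Var[ψ'β|S]] ≥ 0`,
hence `V(Y*) ≤ V(Ỹ)`. -/
theorem covariate_adjustment_variance_improvement {Ω : Type*} {mΩ : MeasurableSpace Ω}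
    (μ : Measure Ω) [IsProbabilityMeasure μ]
    (m : MeasurableSpace Ω) (hm : m ≤ mΩ)
    (π₁ : ℝ) (hπ : π₁ ∈ Set.Ioo (0 : ℝ) 1)
    {d : ℕ} (ψ : Ω → Fin d → ℝ) (T1 T0 N : Ω → ℝ)
    (hT1 : MemLp T1 2 μ) (hT0 : MemLp T0 2 μ)
    (hψ : ∀ i, MemLp (fun ω => ψ ω i) 2 μ)
    (hN : Integrable N μ) (hEN : 0 < ∫ x, N x ∂μ)
    (hdet : IsUnit (condCovMat μ m ψ).det) :
    let EN := ∫ x, N x ∂μ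
    let W := fun ω => (1/π₁) * T1 ω + (1/(1-π₁)) * T0 ω
    let β := (π₁*(1-π₁)*EN) • ((condCovMat μ m ψ)⁻¹ *ᵥ condCovVec μ m W ψ)
    let ψβ := fun ω => ∑ i, ψ ω i * β i
    let Y1s := fun ω => T1 ω - (∑ i, (ψ ω i - ∫ x, ψ x i ∂μ) * β i) / EN
    let Y0s := fun ω => T0 ω - (∑ i, (ψ ω i - ∫ x, ψ x i ∂μ) * β i) / EN
    let κ2 := (1/(π₁*(1-π₁))) * (1/EN^2) * ∫ ω, (ψβ ω - (μ[ψβ|m]) ω)^2 ∂μ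
    Vnotau μ m π₁ Y1s Y0s = Vnotau μ m π₁ T1 T0 - κ2 ∧
    0 ≤ κ2 ∧
    Vnotau μ m π₁ Y1s Y0s ≤ Vnotau μ m π₁ T1 T0 :=
  covariate_adjustment_variance_improvement_general μ m hm π₁ hπ ψ T1 T0 N hT1 hT0 hψ hdet
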